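/- For n ≥ 0, the degenerate falling-factorial satisfies the inversion (x)_{n,λ} = ∑_{k=0}^{n} S_{2,λ}(n,k) (x)_k, where (x)_k = x(x-1)⋯(x-k+1) is the ordinary falling factorial and S_{2,λ}(n,k) are defined via generating function (1/k!)(e_λ(t)-1)^k = ∑_{n≥k} S_{2,λ}(n,k) t^n/n!. -/

import Mathlib

/-- Degenerate falling factorial `(x)_{n,μ} = ∏_{j=0}^{n-1} (x - jμ)`. -/
noncomputable def dfall (x mu : ℝ) (n : ℕ) : ℝ := ∏ j ∈ Finset.range n, (x - j * mu)

/-- The degenerate exponential `e_λ^x(t) = (1+λt)^{x/λ} = ∑_n (x)_{n,λ} t^n/n!`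
as a formal power series. -/
noncomputable def degExpPS (lam x : ℝ) : PowerSeries ℝ :=
  PowerSeries.mk fun n => dfall x lam n / n.factorial

/-- The truncation `∑_{l=0}^{r-1} (1)_{l,λ} t^l / l!`. -/
noncomputable def truncPoly (lam : ℝ) (r : ℕ) : PowerSeries ℝ :=
  ∑ l ∈ Finset.range r, PowerSeries.C (dfall 1 lam l / l.factorial) * PowerSeries.X ^ l

/-- The `r`-truncated degenerate Stirling numbers of the second kind `S_{2,λ}^{[r]}(n, kr)`,
defined by `(1/k!)(e_λ(t) - ∑_{l<r} (1)_{l,λ} t^l/l!)^k = ∑_n S_{2,λ}^{[r]}(n,kr) t^n/n!`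
(the coefficients below `n = kr` vanish automatically). -/
noncomputable def truncS (lam : ℝ) (r k n : ℕ) : ℝ :=
  n.factorial * ((k.factorial : ℝ)⁻¹ *
    PowerSeries.coeff n ((degExpPS lam 1 - truncPoly lam r) ^ k))

/-- The degenerate Stirling numbers of the second kind `S_{2,λ}(n,k)`, defined by
`(1/k!)(e_λ(t)-1)^k = ∑_{n≥k} S_{2,λ}(n,k) t^n/n!`. -/
noncomputable def S2 (lam : ℝ) (n k : ℕ) : ℝ :=
  n.factorial * ((k.factorial : ℝ)⁻¹ * PowerSeries.coeff n ((degExpPS lam 1 - 1) ^ k))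

open PowerSeries

lemma dfall_zero (x mu : ℝ) : dfall x mu 0 = 1 := by simp [dfall]

lemma dfall_succ (x mu : ℝ) (n : ℕ) : dfall x mu (n+1) = dfall x mu n * (x - n * mu) := by
  simp [dfall, Finset.prod_range_succ]

lemma coeff_degExpPS (lam x : ℝ) (n : ℕ) :
    PowerSeries.coeff n (degExpPS lam x) = dfall x lam n / n.factorial := by
  simp [degExpPS]

lemma coeff_X_mul_derivative (f : PowerSeries ℝ) (n : ℕ) :
    PowerSeries.coeff n (PowerSeries.X * PowerSeries.derivative ℝ f)
      = n * PowerSeries.coeff n f := by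
  cases n with
  | zero => simp
  | succ m =>
    rw [PowerSeries.coeff_succ_X_mul, PowerSeries.coeff_derivative]
    push_cast; ring

lemma E_ode (lam : ℝ) :
    (1 + PowerSeries.C lam * PowerSeries.X) * PowerSeries.derivative ℝ (degExpPS lam 1)
      = degExpPS lam 1 := by
  ext n
  rw [add_mul, one_mul, mul_assoc, map_add, PowerSeries.coeff_C_mul,
    coeff_X_mul_derivative, PowerSeries.coeff_derivative]
  simp only [coeff_degExpPS]
  rw [dfall_succ]
  have h1 : ((n.factorial : ℝ)) ≠ 0 := Nat.cast_ne_zero.2 n.factorial_ne_zero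
  rw [Nat.factorial_succ]
  push_cast
  field_simp
  ring

lemma pow_ode (lam : ℝ) (k : ℕ) :
    (1 + PowerSeries.C lam * PowerSeries.X) *
      PowerSeries.derivative ℝ ((degExpPS lam 1 - 1) ^ (k+1))
      = (k+1 : ℕ) • ((degExpPS lam 1 - 1) ^ (k+1) + (degExpPS lam 1 - 1) ^ k) := by
  set E := degExpPS lam 1 with hE
  have hdF : PowerSeries.derivative ℝ (E - 1) = PowerSeries.derivative ℝ E := by
    rw [map_sub, Derivation.map_one_eq_zero, sub_zero]
  rw [Derivation.leibniz_pow]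
  simp only [Nat.add_sub_cancel, smul_eq_mul, hdF]
  rw [mul_smul_comm]
  congr 1
  have h1 : (1 + PowerSeries.C lam * PowerSeries.X) * ((E-1)^k * PowerSeries.derivative ℝ E)
      = (E-1)^k * ((1 + PowerSeries.C lam * PowerSeries.X) * PowerSeries.derivative ℝ E) := by
    ring
  rw [h1, E_ode]
  ring

lemma S2_rec (lam : ℝ) (n k : ℕ) :
    S2 lam (n+1) (k+1) = S2 lam n k + ((k:ℝ) + 1 - lam * n) * S2 lam n (k+1) := by
  have h := congrArg (PowerSeries.coeff n) (pow_ode lam k)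
  rw [add_mul, one_mul, mul_assoc, map_add, PowerSeries.coeff_C_mul,
    coeff_X_mul_derivative, PowerSeries.coeff_derivative, map_nsmul, map_add] at h
  set c1' := PowerSeries.coeff (n+1) ((degExpPS lam 1 - 1)^(k+1)) with hc1'
  set c1 := PowerSeries.coeff n ((degExpPS lam 1 - 1)^(k+1)) with hc1
  set c0 := PowerSeries.coeff n ((degExpPS lam 1 - 1)^k) with hc0
  have hn : ((n.factorial : ℝ)) ≠ 0 := Nat.cast_ne_zero.2 n.factorial_ne_zero
  have hk : ((k.factorial : ℝ)) ≠ 0 := Nat.cast_ne_zero.2 k.factorial_ne_zero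
  simp only [nsmul_eq_mul] at h
  push_cast at h
  -- h : c1' * (n+1) + lam * (n * c1) = (k+1) * (c1 + c0)
  simp only [S2, ← hc1', ← hc1, ← hc0, Nat.factorial_succ]
  push_cast
  have h2 : c1' = ((k+1 : ℝ) * (c1 + c0) - lam * (n * c1)) / (n+1) := by
    field_simp
    linarith [h]
  rw [h2]
  field_simp
  ring

lemma S2_zero_right (lam : ℝ) (n : ℕ) : S2 lam n 0 = if n = 0 then 1 else 0 := by
  simp only [S2, pow_zero, Nat.factorial_zero, PowerSeries.coeff_one]
  cases n <;> simp

lemma S2_eq_zero_of_lt (lam : ℝ) {n k : ℕ} (h : n < k) : S2 lam n k = 0 := by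
  have hX : (PowerSeries.X : PowerSeries ℝ) ∣ (degExpPS lam 1 - 1) := by
    rw [PowerSeries.X_dvd_iff, map_sub, map_one]
    simp [degExpPS, PowerSeries.constantCoeff_mk, dfall]
  have hXk : (PowerSeries.X : PowerSeries ℝ)^k ∣ (degExpPS lam 1 - 1)^k :=
    pow_dvd_pow_of_dvd hX k
  have := PowerSeries.X_pow_dvd_iff.1 hXk n h
  simp [S2, this]


/-- The inversion formula `(x)_{n,λ} = ∑_{k=0}^n S_{2,λ}(n,k) (x)_k`, where `(x)_k` is
the ordinary falling factorial. -/
theorem dfall_eq_sum_S2_fallingFactorial (lam : ℝ) (hlam : lam ≠ 0) (x : ℝ) (n : ℕ) :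
    dfall x lam n = ∑ k ∈ Finset.range (n + 1), S2 lam n k * dfall x 1 k := by
  induction n with
  | zero => simp [dfall_zero, S2_zero_right]
  | succ n ih =>
    set f : ℕ → ℝ := fun k => dfall x 1 k with hf
    set g : ℕ → ℝ := fun k => ((k:ℝ) - lam * n) * S2 lam n k * f k with hg
    have hg0 : g 0 = 0 := by
      cases n with
      | zero => simp [hg]
      | succ m => simp [hg, S2_zero_right]
    have hgtop : g (n+1) = 0 := by
      simp [hg, S2_eq_zero_of_lt lam (Nat.lt_succ_self n)]
    have key : ∑ k ∈ Finset.range (n + 2), S2 lam (n+1) k * f k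
        = ∑ j ∈ Finset.range (n+1), (S2 lam n j * f (j+1) + g (j+1)) := by
      rw [Finset.sum_range_succ' (fun k => S2 lam (n+1) k * f k) (n+1)]
      have h0 : S2 lam (n+1) 0 * f 0 = 0 := by simp [S2_zero_right]
      rw [h0, add_zero]
      refine Finset.sum_congr rfl fun j _ => ?_
      rw [S2_rec, hg]
      push_cast
      ring
    rw [key, Finset.sum_add_distrib]
    have hshift : ∑ j ∈ Finset.range (n+1), g (j+1) = ∑ j ∈ Finset.range (n+1), g j := by
      have h1 := Finset.sum_range_succ' g (n+1)
      have h2 := Finset.sum_range_succ g (n+1)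
      rw [h2, hgtop, add_zero, hg0, add_zero] at h1
      linarith [h1]
    rw [hshift, dfall_succ, ih, Finset.sum_mul, ← Finset.sum_add_distrib]
    refine Finset.sum_congr rfl fun j _ => ?_
    have : f (j+1) = f j * (x - j) := by simp [hf, dfall_succ]
    rw [this, hg]
    ring
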